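/- Closure under implication fails for all three Kripke ignorance operators: there exists a Kripke model M' = (W, R, v) and a world w such that (p ∧ ¬p) → q is valid in all Kripke models, yet M', w does not satisfy ¬I(p ∧ ¬p) → ¬I q, where I is any of I^w (ignorance whether), I^u (unknown truth), or I^d (disbelieving ignorance). -/
import Mathlib

/-- Formulas with the three primitive ignorance operators. -/
inductive Form : Type where
  | var : ℕ → Form
  | neg : Form → Form
  | conj : Form → Form → Form
  | Iw : Form → Form
  | Iu : Form → Form
  | Id : Form → Form

def Form.disj (φ ψ : Form) : Form := .neg (.conj (.neg φ) (.neg ψ))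
def Form.impl (φ ψ : Form) : Form := .neg (.conj φ (.neg ψ))
def Form.iff (φ ψ : Form) : Form := .conj (φ.impl ψ) (ψ.impl φ)

/-- A standard Kripke model. -/
structure KModel (W : Type) where
  R : W → W → Prop
  v : ℕ → W → Prop

/-- Satisfaction in a Kripke model, with the standard semantics for
`Iw` (ignorance whether), `Iu` (unknown truth), `Id` (disbelieving ignorance). -/
def KModel.sat {W : Type} (M : KModel W) : W → Form → Prop
  | w, .var p => M.v p w
  | w, .neg φ => ¬ M.sat w φ
  | w, .conj φ ψ => M.sat w φ ∧ M.sat w ψ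
  | w, .Iw φ => ∃ w' w'', M.R w w' ∧ M.R w w'' ∧ M.sat w' φ ∧ ¬ M.sat w'' φ
  | w, .Iu φ => M.sat w φ ∧ ∃ w', M.R w w' ∧ ¬ M.sat w' φ
  | w, .Id φ => M.sat w φ ∧ ∀ w', w' ≠ w → M.R w w' → ¬ M.sat w' φ

/-- Validity in all Kripke models. -/
def KValid (φ : Form) : Prop :=
  ∀ (W : Type) (M : KModel W) (w : W), M.sat w φ

/-- closure under implication fails for `Iʷ`, `Iᵘ`, `I^d`
on Kripke models. -/
theorem closure_under_implication_fails :
    ∃ (W : Type) (M : KModel W) (w : W),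
      KValid ((Form.conj (.var 0) (.neg (.var 0))).impl (.var 1)) ∧
      ¬ M.sat w ((Form.neg (.Iw (.conj (.var 0) (.neg (.var 0))))).impl
          (.neg (.Iw (.var 1)))) ∧
      ¬ M.sat w ((Form.neg (.Iu (.conj (.var 0) (.neg (.var 0))))).impl
          (.neg (.Iu (.var 1)))) ∧
      ¬ M.sat w ((Form.neg (.Id (.conj (.var 0) (.neg (.var 0))))).impl
          (.neg (.Id (.var 1)))) := by
  refine ⟨Bool, ⟨fun a _ => a = true, fun n w => n = 1 ∧ w = true⟩, true, ?_, ?_, ?_, ?_⟩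
  · intro W M w
    simp [Form.impl, KModel.sat]
  · simp only [Form.impl, KModel.sat]
    push_neg
    decide
  · simp only [Form.impl, KModel.sat]
    push_neg
    decide
  · simp only [Form.impl, KModel.sat]
    push_neg
    decide
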